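/- arXiv:2103.02995 — 6 statements merged into one kernel-verified Lean document; each statement's English description precedes it below -/
import Mathlib

section
/- Let Σ be a set of words over Ā = A ∪ A⁻¹ that is closed under taking prefixes, and let Σ* be the submonoid of Ā* it generates. Then the closure S of Σ* under partial free reduction is prefix closed: if α ∈ S and β is a prefix of α then β ∈ S. -/
/-- The submonoid of the free monoid `List (A × Bool)` generated by a language `L`:
all concatenations of finitely many words from `L`. -/
def kleeneStar {A : Type*} (L : Set (List (A × Bool))) : Set (List (A × Bool)) :=
  {w | ∃ l : List (List (A × Bool)), (∀ u ∈ l, u ∈ L) ∧ w = l.flatten}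

/-- The closure of a language under partial free reduction `FreeGroup.Red`. -/
def redClosure {A : Type*} (L : Set (List (A × Bool))) : Set (List (A × Bool)) :=
  {β | ∃ γ ∈ L, FreeGroup.Red γ β}

lemma kleeneStar_prefix_closed {A : Type*} (Sig : Set (List (A × Bool)))
    (hpre : ∀ w ∈ Sig, ∀ u : List (A × Bool), u <+: w → u ∈ Sig)
    (l : List (List (A × Bool))) (hl : ∀ u ∈ l, u ∈ Sig)
    (β : List (A × Bool)) (hβ : β <+: l.flatten) : β ∈ kleeneStar Sig := by
  induction l generalizing β with
  | nil =>
    simp only [List.flatten_nil, List.prefix_nil] at hβ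
    exact ⟨[], by simp, by simp [hβ]⟩
  | cons u l ih =>
    simp only [List.flatten_cons] at hβ
    rcases (List.prefix_or_prefix_of_prefix hβ (List.prefix_append u l.flatten)) with h | h
    · exact ⟨[β], by simpa using hpre u (hl u (by simp)) β h, by simp⟩
    · obtain ⟨β', rfl⟩ := h
      have hβ' : β' <+: l.flatten := (List.prefix_append_right_inj u).mp hβ
      obtain ⟨m, hm, rfl⟩ := ih (fun v hv => hl v (by simp [hv])) β' hβ'
      exact ⟨u :: m, by
        intro v hv
        rcases List.mem_cons.mp hv with rfl | hv
        · exact hl v (by simp)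
        · exact hm v hv, by simp⟩

/-- if Σ is prefix closed, then the closure S of Σ* under partial free
reduction is prefix closed. -/
theorem redClosure_star_prefix_closed {A : Type*} (Sig : Set (List (A × Bool)))
    (hpre : ∀ w ∈ Sig, ∀ u : List (A × Bool), u <+: w → u ∈ Sig) :
    ∀ α ∈ redClosure (kleeneStar Sig), ∀ β : List (A × Bool), β <+: α →
      β ∈ redClosure (kleeneStar Sig) := by
  rintro α ⟨γ, ⟨l, hl, rfl⟩, hred⟩ β ⟨δ, rfl⟩
  obtain ⟨γ₁, γ₂, heq, h₁, _⟩ := FreeGroup.Red.to_append_iff.mp hred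
  have hγ₁ : γ₁ <+: l.flatten := heq ▸ ⟨γ₂, rfl⟩
  exact ⟨γ₁, kleeneStar_prefix_closed Sig hpre l hl γ₁ hγ₁, h₁⟩
end

section
/- Let S ⊆ Ā* be a submonoid closed under partial free reduction and prefix closed, and define U = { β ∈ S : β⁻¹ ∈ S }, where β⁻¹ denotes the formal inverse word. Then U is a submonoid of Ā* closed under taking formal inverses, and U satisfies property (A): for all words α, β, γ ∈ Ā*, if αβ ∈ U and βγ ∈ U then α, β, γ ∈ U. -/
theorem invRev_append' {A : Type*} (a b : List (A × Bool)) :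
    FreeGroup.invRev (a ++ b) = FreeGroup.invRev b ++ FreeGroup.invRev a := by
  simp [FreeGroup.invRev]

theorem red_invRev_append_self {A : Type*} :
    ∀ w : List (A × Bool), FreeGroup.Red (FreeGroup.invRev w ++ w) []
  | [] => Relation.ReflTransGen.refl
  | (x, b) :: t => by
    have h1 : FreeGroup.invRev ((x, b) :: t)
        = FreeGroup.invRev t ++ [(x, !b)] := by
      simp [FreeGroup.invRev]
    have step : FreeGroup.Red.Step
        (FreeGroup.invRev t ++ ((x, !b) :: (x, !!b) :: t))
        (FreeGroup.invRev t ++ t) := FreeGroup.Red.Step.not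
    rw [h1, List.append_assoc]
    simp only [Bool.not_not] at step
    exact (Relation.ReflTransGen.single step).trans (red_invRev_append_self t)

theorem red_append_invRev_self {A : Type*} (w : List (A × Bool)) :
    FreeGroup.Red (w ++ FreeGroup.invRev w) [] := by
  have := red_invRev_append_self (FreeGroup.invRev w)
  rwa [FreeGroup.invRev_invRev] at this

/-- Let S ⊆ Ā* be a submonoid, closed under partial free reduction
(`FreeGroup.Red`) and prefix closed. Let U = { β ∈ S : β⁻¹ ∈ S }, where the formal
inverse of a word is `FreeGroup.invRev`. Then U is a submonoid closed under formal
inverses, and U has property (A): αβ ∈ U and βγ ∈ U imply α, β, γ ∈ U. -/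
theorem invertible_language_propA {A : Type*} (S : Set (List (A × Bool)))
    (hone : ([] : List (A × Bool)) ∈ S)
    (hmul : ∀ a ∈ S, ∀ b ∈ S, a ++ b ∈ S)
    (hred : ∀ a ∈ S, ∀ b : List (A × Bool), FreeGroup.Red a b → b ∈ S)
    (hpre : ∀ a ∈ S, ∀ b : List (A × Bool), b <+: a → b ∈ S) :
    ∀ U : Set (List (A × Bool)), U = {w | w ∈ S ∧ FreeGroup.invRev w ∈ S} →
      ([] ∈ U) ∧
      (∀ a ∈ U, ∀ b ∈ U, a ++ b ∈ U) ∧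
      (∀ a ∈ U, FreeGroup.invRev a ∈ U) ∧
      (∀ α β γ : List (A × Bool), α ++ β ∈ U → β ++ γ ∈ U →
        α ∈ U ∧ β ∈ U ∧ γ ∈ U) := by
  intro U hU
  subst hU
  refine ⟨⟨hone, by simpa [FreeGroup.invRev] using hone⟩, ?_, ?_, ?_⟩
  · rintro a ⟨ha, ha'⟩ b ⟨hb, hb'⟩
    exact ⟨hmul a ha b hb, by rw [invRev_append']; exact hmul _ hb' _ ha'⟩
  · rintro a ⟨ha, ha'⟩
    exact ⟨ha', by rwa [FreeGroup.invRev_invRev]⟩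
  · rintro α β γ ⟨hab, hab'⟩ ⟨hbg, hbg'⟩
    rw [invRev_append'] at hab' hbg'
    -- memberships in S from prefix closure
    have hα : α ∈ S := hpre _ hab _ ⟨β, rfl⟩
    have hβ : β ∈ S := hpre _ hbg _ ⟨γ, rfl⟩
    have hβ' : FreeGroup.invRev β ∈ S := hpre _ hab' _ ⟨FreeGroup.invRev α, rfl⟩
    have hγ' : FreeGroup.invRev γ ∈ S := hpre _ hbg' _ ⟨FreeGroup.invRev β, rfl⟩
    -- γ ∈ S : invRev β ++ (β ++ γ) reduces to γ
    have hγ : γ ∈ S := by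
      have hm := hmul _ hβ' _ hbg
      refine hred _ hm _ ?_
      rw [← List.append_assoc]
      have := FreeGroup.Red.append_append (red_invRev_append_self β)
        (Relation.ReflTransGen.refl (a := γ))
      simpa using this
    -- invRev α ∈ S : β ++ (invRev β ++ invRev α) reduces to invRev α
    have hα' : FreeGroup.invRev α ∈ S := by
      have hm := hmul _ hβ _ hab'
      refine hred _ hm _ ?_
      rw [← List.append_assoc]
      have := FreeGroup.Red.append_append (red_append_invRev_self β)
        (Relation.ReflTransGen.refl (a := FreeGroup.invRev α))
      simpa using this
    exact ⟨⟨hα, hα'⟩, ⟨hβ, hβ'⟩, ⟨hγ, hγ'⟩⟩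
end

section
/- If M is an inverse monoid and s, t, x ∈ M are such that s·x·x⁻¹·t is right invertible, then s·x·x⁻¹·t = s·t. -/
/-- In an inverse monoid, if s * x * x⁻¹ * t is right invertible then
s * x * x⁻¹ * t = s * t. -/
theorem inverse_monoid_middle_idempotent_cancel {M : Type*} [Monoid M] (inv : M → M)
    (h1 : ∀ x : M, x * inv x * x = x)
    (h2 : ∀ x : M, inv x * x * inv x = inv x)
    (h3 : ∀ e f : M, e * e = e → f * f = f → e * f = f * e)
    (s t x : M) (h : ∃ y : M, s * x * inv x * t * y = 1) :
    s * x * inv x * t = s * t := by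
  obtain ⟨y, hy⟩ := h
  have he : (x * inv x) * (x * inv x) = x * inv x := by
    rw [← mul_assoc, h1]
  have hy' : ∀ z : M, s * ((x * inv x) * (t * (y * z))) = z := by
    intro z
    calc s * ((x * inv x) * (t * (y * z))) = (s * x * inv x * t * y) * z := by
          simp only [mul_assoc]
      _ = z := by rw [hy, one_mul]
  have h1' : s * ((x * inv x) * (t * y)) = 1 := by
    have := hy' 1
    simpa using this
  have hp : (t * (y * (s * (x * inv x)))) * (t * (y * (s * (x * inv x))))
      = t * (y * (s * (x * inv x))) := by
    calc (t * (y * (s * (x * inv x)))) * (t * (y * (s * (x * inv x))))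
        = t * (y * (s * ((x * inv x) * (t * (y * (s * (x * inv x))))))) := by
          simp only [mul_assoc]
      _ = t * (y * (s * (x * inv x))) := by rw [hy']
  have hc := h3 _ _ he hp
  have hc' : (x * inv x) * (t * (y * (s * (x * inv x)))) = t * (y * (s * (x * inv x))) := by
    rw [hc]
    calc (t * (y * (s * (x * inv x)))) * (x * inv x)
        = t * (y * (s * ((x * inv x) * (x * inv x)))) := by simp only [mul_assoc]
      _ = t * (y * (s * (x * inv x))) := by rw [he]
  have hse : s * (t * (y * (s * (x * inv x)))) = s * (x * inv x) := by
    rw [← hc']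
    exact hy' (s * (x * inv x))
  have sty1 : s * (t * y) = 1 := by
    calc s * (t * y)
        = s * (t * (y * (s * ((x * inv x) * (t * y))))) := by rw [h1', mul_one]
      _ = (s * (t * (y * (s * (x * inv x))))) * (t * y) := by simp only [mul_assoc]
      _ = (s * (x * inv x)) * (t * y) := by rw [hse]
      _ = s * ((x * inv x) * (t * y)) := by rw [mul_assoc]
      _ = 1 := h1'
  have uniq : ∀ a b : M, a * y = 1 → b * y = 1 → a = b := by
    intro a b ha1 hb1
    have hya : (y * a) * (y * a) = y * a := by
      calc (y * a) * (y * a) = y * ((a * y) * a) := by simp only [mul_assoc]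
        _ = y * a := by rw [ha1, one_mul]
    have hyb : (y * b) * (y * b) = y * b := by
      calc (y * b) * (y * b) = y * ((b * y) * b) := by simp only [mul_assoc]
        _ = y * b := by rw [hb1, one_mul]
    have hcab := h3 _ _ hya hyb
    have step : a * ((y * b) * (y * a)) = a := by
      calc a * ((y * b) * (y * a)) = (a * y) * ((b * y) * a) := by simp only [mul_assoc]
        _ = a := by rw [ha1, hb1, one_mul, one_mul]
    have step2 : a * ((y * a) * (y * b)) = b := by
      calc a * ((y * a) * (y * b)) = ((a * y) * a) * (y * b) := by simp only [mul_assoc]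
        _ = a * (y * b) := by rw [ha1, one_mul]
        _ = (a * y) * b := by rw [mul_assoc]
        _ = b := by rw [ha1, one_mul]
    calc a = a * ((y * b) * (y * a)) := step.symm
      _ = a * ((y * a) * (y * b)) := by rw [← hcab]
      _ = b := step2
  have ha1 : (s * ((x * inv x) * t)) * y = 1 := by
    simp only [mul_assoc] at hy ⊢
    exact hy
  have hb1 : (s * t) * y = 1 := by
    rw [mul_assoc]; exact sty1
  have main := uniq _ _ ha1 hb1
  simp only [mul_assoc] at main ⊢
  exact main
end

section
/- Let H be a group. The subgroup of the free product G = H ∗ F(t) (free product with an infinite cyclic group generated by t) generated by H ∪ tHt⁻¹ is isomorphic to the free product H ∗ H. -/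
open Monoid

section Aux

variable (H : Type*) [Group H]

/-- The free product of ℤ-many copies of `H`. -/
private abbrev KK := Monoid.CoprodI (fun _ : ℤ => H)

private def ofi (i : ℤ) : H →* KK H := @Monoid.CoprodI.of ℤ (fun _ => H) _ i

/-- Shift homomorphism. -/
private def shiftHom (n : ℤ) : KK H →* KK H :=
  Monoid.CoprodI.lift (fun i => ofi H (i + n))

private lemma shiftHom_of (n i : ℤ) (h : H) :
    shiftHom H n (ofi H i h) = ofi H (i + n) h := by
  simp [shiftHom, ofi, Monoid.CoprodI.lift_of]

private lemma shiftHom_comp (m n : ℤ) :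
    (shiftHom H m).comp (shiftHom H n) = shiftHom H (n + m) := by
  apply Monoid.CoprodI.ext_hom
  intro i
  ext h
  show shiftHom H m (shiftHom H n (ofi H i h)) = shiftHom H (n + m) (ofi H i h)
  rw [shiftHom_of, shiftHom_of, shiftHom_of, add_assoc]

private lemma shiftHom_zero : shiftHom H 0 = MonoidHom.id (KK H) := by
  apply Monoid.CoprodI.ext_hom
  intro i
  ext h
  show shiftHom H 0 (ofi H i h) = ofi H i h
  rw [shiftHom_of, add_zero]

/-- Shift as a `MulEquiv`. -/
private def shiftEquiv' (n : ℤ) : KK H ≃* KK H :=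
  MonoidHom.toMulEquiv (shiftHom H n) (shiftHom H (-n))
    (by rw [shiftHom_comp]; simp [shiftHom_zero])
    (by rw [shiftHom_comp]; simp [shiftHom_zero])

/-- Shift action of ℤ on `KK H`. -/
private def shiftAut : Multiplicative ℤ →* MulAut (KK H) where
  toFun n := shiftEquiv' H n.toAdd
  map_one' := by
    ext x
    show shiftHom H 0 x = x
    rw [shiftHom_zero]; rfl
  map_mul' m n := by
    ext x
    have := DFunLike.congr_fun (shiftHom_comp H m.toAdd n.toAdd) x
    simp only [MonoidHom.comp_apply] at this
    show shiftHom H (m.toAdd + n.toAdd) x = shiftHom H m.toAdd (shiftHom H n.toAdd x)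
    rw [add_comm]
    exact this.symm

/-- Retraction `KK H →* H ∗ H` sending index 0 to `inl`, index 1 to `inr`. -/
private def retr : KK H →* Coprod H H :=
  Monoid.CoprodI.lift (fun i => if i = 0 then Coprod.inl else if i = 1 then Coprod.inr else 1)

private lemma retr_ofi (i : ℤ) (h : H) :
    retr H (ofi H i h) = (if i = 0 then Coprod.inl else if i = 1 then Coprod.inr else 1) h := by
  simp [retr, ofi, Monoid.CoprodI.lift_of]

/-- `H ∗ H → KK H` using indices 0 and 1 is injective. -/
private lemma g_injective :
    Function.Injective (Coprod.lift (ofi H 0) (ofi H 1)) := by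
  have hcomp : (retr H).comp (Coprod.lift (ofi H 0) (ofi H 1)) = MonoidHom.id _ := by
    apply Coprod.hom_ext
    · refine MonoidHom.ext fun h => ?_
      simp [Coprod.lift_apply_inl, retr_ofi]
    · refine MonoidHom.ext fun h => ?_
      simp [Coprod.lift_apply_inr, retr_ofi]
  intro a b hab
  have ha := DFunLike.congr_fun hcomp a
  have hb := DFunLike.congr_fun hcomp b
  simp only [MonoidHom.comp_apply, MonoidHom.id_apply] at ha hb
  rw [← ha, ← hb, hab]

end Aux

/-- For a group H, the subgroup of the free product G = H ∗ F(t)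
generated by H ∪ tHt⁻¹ is isomorphic to H ∗ H: the natural homomorphism
H ∗ H → G sending the first factor identically to H and the second factor h ↦ tht⁻¹
is injective, and its range is the subgroup generated by H ∪ tHt⁻¹. -/
theorem subgroup_H_and_conj_H_free_product (H : Type*) [Group H] :
    ∀ t : Coprod H (FreeGroup Unit), t = Coprod.inr (FreeGroup.of ()) →
    ∀ f : Coprod H H →* Coprod H (FreeGroup Unit),
      f = Coprod.lift Coprod.inl ((MulAut.conj t).toMonoidHom.comp Coprod.inl) →
      Function.Injective f ∧
        f.range = Subgroup.closure
          (Set.range (Coprod.inl : H →* Coprod H (FreeGroup Unit)) ∪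
            Set.range (fun h : H => t * Coprod.inl h * t⁻¹)) := by
  intro t ht f hf
  constructor
  · -- Injectivity via the semidirect product (∗_ℤ H) ⋊ ℤ
    set ψ : Coprod H (FreeGroup Unit) →* SemidirectProduct (KK H) (Multiplicative ℤ) (shiftAut H) :=
      Coprod.lift (SemidirectProduct.inl.comp (ofi H 0))
        (FreeGroup.lift (fun _ => SemidirectProduct.inr (Multiplicative.ofAdd 1))) with hψ
    have h1 : ψ t = SemidirectProduct.inr (φ := shiftAut H) (Multiplicative.ofAdd 1) := by
      rw [ht, hψ]
      simp [Coprod.lift_apply_inr]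
    have h2 : ∀ h : H, ψ (Coprod.inl h) = SemidirectProduct.inl (ofi H 0 h) := by
      intro h
      rw [hψ]
      simp [Coprod.lift_apply_inl]
    have key : ψ.comp f = SemidirectProduct.inl.comp (Coprod.lift (ofi H 0) (ofi H 1)) := by
      subst hf
      apply Coprod.hom_ext
      · refine MonoidHom.ext fun h => ?_
        simp only [MonoidHom.comp_apply, Coprod.lift_apply_inl]
        exact h2 h
      · refine MonoidHom.ext fun h => ?_
        simp only [MonoidHom.comp_apply, Coprod.lift_apply_inr, Coprod.lift_apply_inl,
          MulEquiv.coe_toMonoidHom, MulAut.conj_apply]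
        rw [map_mul, map_mul, map_inv, h1, h2 h, ← map_inv (SemidirectProduct.inr),
          ← SemidirectProduct.inl_aut]
        congr 1
    have hinj : Function.Injective (ψ.comp f) := by
      rw [key]
      exact SemidirectProduct.inl_injective.comp (g_injective H)
    exact fun a b hab => hinj (by simp only [MonoidHom.comp_apply, hab])
  · -- Range computation
    subst hf
    rw [Coprod.range_lift, Subgroup.closure_union]
    congr 1
    · rw [← MonoidHom.coe_range, Subgroup.closure_eq]
    · have hset : Set.range (fun h : H => t * Coprod.inl h * t⁻¹) =
          Set.range ((MulAut.conj t).toMonoidHom.comp (Coprod.inl : H →* _)) := by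
        ext x
        simp [MulAut.conj_apply]
      rw [hset, ← MonoidHom.coe_range, Subgroup.closure_eq]
end

section
/- Let G and H be groups, M a submonoid of G and N a submonoid of H. Then the submonoid of the free product G ∗ H generated by M ∪ N is isomorphic to the monoid free product M ∗ N. -/
open Monoid

/-!
Reduced words (alternating, with no letter equal to `1`) are a normal form for free products of
monoids. An injective homomorphism on each factor sends reduced words to reduced words, so the
induced map of free products is injective; its range is generated by the images of the factors.
-/

open Function

universe u v u' v' w

namespace Monoid.CoprodI

variable {ι : Type*} {M N : ι → Type*} [∀ i, Monoid (M i)] [∀ i, Monoid (N i)]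

def map (f : ∀ i, M i →* N i) : CoprodI M →* CoprodI N :=
  lift fun i => of.comp (f i)

namespace Word

def map (f : ∀ i, M i →* N i) (hf : ∀ i, Injective (f i)) (w : Word M) : Word N where
  toList := w.toList.map (Sigma.map id fun i => f i)
  ne_one := by
    simp only [List.mem_map]
    rintro _ ⟨⟨i, m⟩, hm, rfl⟩
    exact (map_ne_one_iff (f i) (hf i)).2 (w.ne_one _ hm)
  chain_ne := (List.isChain_map _).2 w.chain_ne

theorem map_injective (f : ∀ i, M i →* N i) (hf : ∀ i, Injective (f i)) :
    Injective (map f hf) := fun _ _ h =>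
  Word.ext <| List.map_injective_iff.2 (injective_id.sigma_map hf) (congrArg Word.toList h)

theorem prod_map (f : ∀ i, M i →* N i) (hf : ∀ i, Injective (f i)) (w : Word M) :
    (w.map f hf).prod = CoprodI.map f w.prod := by
  simp only [prod, map, CoprodI.map, map_list_prod, List.map_map]
  rfl

end Word

theorem map_injective {f : ∀ i, M i →* N i} (hf : ∀ i, Injective (f i)) :
    Injective (map f) := by
  classical
  have map_eq (x : CoprodI M) : map f x = (Word.map f hf (Word.equiv x)).prod := by
    rw [Word.prod_map]
    exact congrArg _ (Word.equiv.symm_apply_apply x).symm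
  intro x y h
  rw [map_eq, map_eq] at h
  exact Word.equiv.injective (Word.map_injective f hf (Word.equiv.symm.injective h))

end Monoid.CoprodI

namespace Monoid.Coprod

instance condMonoid {X Y : Type w} [Monoid X] [Monoid Y] : ∀ b : Bool, Monoid (cond b X Y)
  | true => ‹Monoid X›
  | false => ‹Monoid Y›

variable {M : Type u} {N : Type v} {M' : Type u'} {N' : Type v'}
  [Monoid M] [Monoid N] [Monoid M'] [Monoid N']

-- `CoprodI` needs all factors in one universe, hence the `ULift`s.
def mulEquivCoprodI : M ∗ N ≃* CoprodI (fun b : Bool => cond b (ULift.{v} M) (ULift.{u} N)) :=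
  MonoidHom.toMulEquiv
    (lift ((CoprodI.of (i := true)).comp (MulEquiv.ulift.symm : M ≃* ULift.{v} M).toMonoidHom)
      ((CoprodI.of (i := false)).comp (MulEquiv.ulift.symm : N ≃* ULift.{u} N).toMonoidHom))
    (CoprodI.lift fun
      | true => inl.comp (MulEquiv.ulift : ULift.{v} M ≃* M).toMonoidHom
      | false => inr.comp (MulEquiv.ulift : ULift.{u} N ≃* N).toMonoidHom)
    (hom_ext rfl rfl) (CoprodI.ext_hom _ _ fun b => by cases b <;> ext <;> rfl)

def condMap (f : M →* M') (g : N →* N') :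
    ∀ b : Bool, cond b (ULift.{v} M) (ULift.{u} N) →* cond b (ULift.{v'} M') (ULift.{u'} N')
  | true => (MulEquiv.ulift.symm : M' ≃* ULift M').toMonoidHom.comp
      (f.comp MulEquiv.ulift.toMonoidHom)
  | false => (MulEquiv.ulift.symm : N' ≃* ULift N').toMonoidHom.comp
      (g.comp MulEquiv.ulift.toMonoidHom)

theorem condMap_injective {f : M →* M'} {g : N →* N'} (hf : Injective f) (hg : Injective g) :
    ∀ b, Injective (condMap f g b)
  | true => MulEquiv.ulift.symm.injective.comp (hf.comp MulEquiv.ulift.injective)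
  | false => MulEquiv.ulift.symm.injective.comp (hg.comp MulEquiv.ulift.injective)

theorem mulEquivCoprodI_map (f : M →* M') (g : N →* N') (x : M ∗ N) :
    mulEquivCoprodI (map f g x) = CoprodI.map (condMap f g) (mulEquivCoprodI x) := by
  suffices mulEquivCoprodI.toMonoidHom.comp (map f g) =
      (CoprodI.map (condMap f g)).comp mulEquivCoprodI.toMonoidHom from
    DFunLike.congr_fun this x
  exact hom_ext (by ext; rfl) (by ext; rfl)

theorem map_injective {f : M →* M'} {g : N →* N'} (hf : Injective f) (hg : Injective g) :
    Injective (map f g) := by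
  intro x y h
  apply mulEquivCoprodI.injective
  apply CoprodI.map_injective (condMap_injective hf hg)
  rw [← mulEquivCoprodI_map, ← mulEquivCoprodI_map, h]

theorem map_eq_lift (f : M →* M') (g : N →* N') : map f g = lift (inl.comp f) (inr.comp g) :=
  hom_ext rfl rfl

end Monoid.Coprod

/-- For groups G, H with submonoids M ≤ G, N ≤ H, the submonoid of the
free product G ∗ H generated by M ∪ N is isomorphic to the monoid free product M ∗ N:
the natural homomorphism M ∗ N → G ∗ H induced by the inclusions is injective, and
its range is the submonoid generated by the images of M and N. -/
theorem submonoid_free_product_in_group_free_product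
    {G H : Type*} [Group G] [Group H] (M : Submonoid G) (N : Submonoid H) :
    ∀ f : Coprod M N →* Coprod G H,
      f = Coprod.lift ((Coprod.inl : G →* Coprod G H).comp M.subtype)
            ((Coprod.inr : H →* Coprod G H).comp N.subtype) →
      Function.Injective f ∧
        MonoidHom.mrange f = Submonoid.closure
          ((Coprod.inl : G →* Coprod G H) '' (M : Set G) ∪
           (Coprod.inr : H →* Coprod G H) '' (N : Set H)) := by
  rintro f rfl
  constructor
  · rw [← Coprod.map_eq_lift]
    exact Coprod.map_injective Subtype.coe_injective Subtype.coe_injective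
  · rw [Coprod.mrange_lift, MonoidHom.mrange_comp, MonoidHom.mrange_comp,
      Submonoid.mrange_subtype, Submonoid.mrange_subtype, ← Submonoid.coe_map,
      ← Submonoid.coe_map, Submonoid.closure_union, Submonoid.closure_eq, Submonoid.closure_eq]
end

section
/- Let φ : F(x,y,z) → G be the homomorphism to the one-relator group G = ⟨a, b | ab⁻¹a²·b·a⁻⁴ = 1⟩ given by x ↦ ab⁻¹a², y ↦ b, z ↦ a⁴. Then φ(z²y) = φ(yz³) in G, although z²y ≠ yz³ in the group ⟨x,y,z | xyz⁻¹ = 1⟩ (which is free on y, z). Hence the induced map ⟨x,y,z | xyz⁻¹=1⟩ → G is not injective. -/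
/-! In `G` the relation says that conjugation by `b` carries `a³` to `a²`, hence `a¹²`
to `a⁸`: `φ(z²y) = a⁸b = ba¹² = φ(yz³)`. In `K`, on the other hand, the homomorphism to `ℤ`
counting the exponent of `z` (with `x ↦ 1`, `y ↦ 0`) separates `z²y` from `yz³`. -/

/-- The one-relator group G = ⟨a, b | ab⁻¹a²·b·a⁻⁴ = 1⟩, generators indexed by
`Fin 2` (0 ↦ a, 1 ↦ b). -/
def higmanRels : Set (FreeGroup (Fin 2)) :=
  {FreeGroup.of 0 * (FreeGroup.of 1)⁻¹ * (FreeGroup.of 0) ^ 2 * FreeGroup.of 1 *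
    ((FreeGroup.of 0) ^ 4)⁻¹}

/-- K = ⟨x, y, z | xyz⁻¹ = 1⟩, generators indexed by `Fin 3` (0 ↦ x, 1 ↦ y, 2 ↦ z). -/
def higmanKRels : Set (FreeGroup (Fin 3)) :=
  {FreeGroup.of 0 * FreeGroup.of 1 * (FreeGroup.of 2)⁻¹}

/-- The substitution x ↦ ab⁻¹a², y ↦ b, z ↦ a⁴ into G. -/
noncomputable def higmanSubst : Fin 3 → PresentedGroup higmanRels :=
  ![PresentedGroup.of 0 * (PresentedGroup.of 1)⁻¹ * (PresentedGroup.of 0) ^ 2,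
    PresentedGroup.of 1, (PresentedGroup.of 0) ^ 4]

open PresentedGroup

lemma PresentedGroup.comp_mk_eq_lift {α H : Type*} [Group H] {rels : Set (FreeGroup α)}
    {f : α → H} (ψ : PresentedGroup rels →* H) (hψ : ∀ i, ψ (of i) = f i) :
    ψ.comp (mk rels) = FreeGroup.lift f :=
  FreeGroup.ext_hom _ _ fun i => by simpa [of] using hψ i

lemma higmanG_sq_mul_eq_mul_pow_three :
    (of 0 : PresentedGroup higmanRels) ^ 2 * of 1 = of 1 * of 0 ^ 3 := by
  have hrel : (of 0 : PresentedGroup higmanRels) * (of 1)⁻¹ * of 0 ^ 2 * of 1 *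
      (of 0 ^ 4)⁻¹ = 1 := by
    simpa [of] using one_of_mem (rels := higmanRels) (Set.mem_singleton _)
  calc (of 0 : PresentedGroup higmanRels) ^ 2 * of 1
      = of 1 * ((of 0)⁻¹ * (of 0 * (of 1)⁻¹ * of 0 ^ 2 * of 1 * (of 0 ^ 4)⁻¹) *
          of 0 ^ 4) := by
        group
    _ = of 1 * of 0 ^ 3 := by
        rw [hrel]
        group

lemma lift_higmanSubst_sq_mul_eq_lift_higmanSubst_mul_pow_three :
    FreeGroup.lift higmanSubst (FreeGroup.of 2 ^ 2 * FreeGroup.of 1) =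
      FreeGroup.lift higmanSubst (FreeGroup.of 1 * FreeGroup.of 2 ^ 3) := by
  have hsemi : SemiconjBy _ _ _ := higmanG_sq_mul_eq_mul_pow_three.symm
  simpa [higmanSubst, ← pow_mul] using (hsemi.pow_right 4).eq.symm

noncomputable def higmanKZExponent : PresentedGroup higmanKRels →* Multiplicative ℤ :=
  toGroup (f := ![Multiplicative.ofAdd 1, 1, Multiplicative.ofAdd 1]) fun r hr => by
    rw [Set.mem_singleton_iff.mp hr]
    simp

lemma higmanK_sq_mul_ne_mul_pow_three :
    (of 2 : PresentedGroup higmanKRels) ^ 2 * of 1 ≠ of 1 * of 2 ^ 3 := fun h => by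
  have h' := congrArg (fun g => Multiplicative.toAdd (higmanKZExponent g)) h
  simp [higmanKZExponent] at h'

/-- Under φ : F(x,y,z) → G = ⟨a,b | ab⁻¹a²ba⁻⁴⟩ with x ↦ ab⁻¹a²,
y ↦ b, z ↦ a⁴, we have φ(z²y) = φ(yz³), although z²y ≠ yz³ in K = ⟨x,y,z | xyz⁻¹⟩
(which is free on y, z); hence any homomorphism K → G induced by this substitution
is not injective. -/
theorem higman_substitution_not_injective :
    (FreeGroup.lift higmanSubst ((FreeGroup.of 2) ^ 2 * FreeGroup.of 1) =
      FreeGroup.lift higmanSubst (FreeGroup.of 1 * (FreeGroup.of 2) ^ 3)) ∧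
    ((PresentedGroup.of 2 : PresentedGroup higmanKRels) ^ 2 * PresentedGroup.of 1 ≠
      PresentedGroup.of 1 * (PresentedGroup.of 2) ^ 3) ∧
    (∀ ψ : PresentedGroup higmanKRels →* PresentedGroup higmanRels,
      (∀ i : Fin 3, ψ (PresentedGroup.of i) = higmanSubst i) →
      ¬ Function.Injective ψ) := by
  refine ⟨lift_higmanSubst_sq_mul_eq_lift_higmanSubst_mul_pow_three,
    higmanK_sq_mul_ne_mul_pow_three, fun ψ hψ hinj => higmanK_sq_mul_ne_mul_pow_three (hinj ?_)⟩
  have hψ_mk := PresentedGroup.comp_mk_eq_lift ψ hψ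
  simpa [← hψ_mk, of] using lift_higmanSubst_sq_mul_eq_lift_higmanSubst_mul_pow_three
end
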